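/- arXiv:2007.16146 — 5 statements merged into one kernel-verified Lean document; each statement's English description precedes it below -/
import Mathlib

section
/- For any 0 ≤ Q ≤ 1, the function f(x) = 1 + φ(√(Q + (1-Q)x)) - φ(√x) is monotonically increasing in x on [0,1]. -/
/-!
Put `g x = φ(√x)` and `y = Q + (1 - Q) x ≥ x`. Since `1 - y = (1 - Q)(1 - x)`, the derivative
`(1 - Q) g'(y) - g'(x)` of `g y - g x` is nonnegative as soon as `(1 - x) g'(x)` is increasing
(for `Q = 1` the claim is just that `g` decreases). With `t = √x` and
`L(t) = log (1 + t) - log (1 - t)` one has `(1 - x) g'(x) = -(1 - t²) L(t) / (4 t log 2)`, and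
`(1 - t²) L(t) / t` is decreasing because its derivative is `(2t - (1 + t²) L(t)) / t²` and
`L(t) ≥ 2t`.
-/

noncomputable def phi (x : ℝ) : ℝ :=
  1 - (1/2) * (1 + x) * Real.logb 2 (1 + x) - (1/2) * (1 - x) * Real.logb 2 (1 - x)

open Real Set

noncomputable def logRatio (t : ℝ) : ℝ := log (1 + t) - log (1 - t)

lemma hasDerivAt_logRatio {t : ℝ} (h₁ : -1 < t) (h₂ : t < 1) :
    HasDerivAt logRatio (2 / (1 - t ^ 2)) t := by
  have d₁ := ((hasDerivAt_id t).const_add 1).log (by simp; linarith)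
  have d₂ := ((hasDerivAt_id t).const_sub 1).log (by simp; linarith)
  refine (d₁.sub d₂).congr_deriv ?_
  have : 1 + t ≠ 0 := by linarith
  have : 1 - t ≠ 0 := by linarith
  have : 1 - t ^ 2 ≠ 0 := by nlinarith
  simp only [id]
  field_simp
  ring

lemma two_mul_le_logRatio {t : ℝ} (h₀ : 0 ≤ t) (h₁ : t < 1) : 2 * t ≤ logRatio t := by
  have hd : ∀ x ∈ Ico (0 : ℝ) 1,
      HasDerivAt (fun t => logRatio t - 2 * t) (2 / (1 - x ^ 2) - 2 * 1) x := fun x hx =>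
    (hasDerivAt_logRatio (by linarith [hx.1]) hx.2).sub ((hasDerivAt_id x).const_mul 2)
  have hmono : MonotoneOn (fun t => logRatio t - 2 * t) (Ico 0 1) := by
    refine monotoneOn_of_hasDerivWithinAt_nonneg (convex_Ico 0 1)
      (fun x hx => (hd x hx).continuousAt.continuousWithinAt)
      (fun x hx => (hd x (interior_subset hx)).hasDerivWithinAt) ?_
    rw [interior_Ico]
    rintro x ⟨hx₀, hx₁⟩
    rw [mul_one, sub_nonneg, le_div_iff₀ (by nlinarith)]
    nlinarith
  simpa [logRatio] using hmono ⟨le_rfl, one_pos⟩ ⟨h₀, h₁⟩ h₀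

lemma antitoneOn_one_sub_sq_mul_logRatio_div :
    AntitoneOn (fun t => (1 - t ^ 2) * logRatio t / t) (Ioo 0 1) := by
  have hd : ∀ t ∈ Ioo (0 : ℝ) 1, HasDerivAt (fun t => (1 - t ^ 2) * logRatio t / t)
      ((2 * t - (1 + t ^ 2) * logRatio t) / t ^ 2) t := by
    rintro t ⟨h₀, h₁⟩
    refine ((((hasDerivAt_pow 2 t).const_sub 1).mul
      (hasDerivAt_logRatio (by linarith) h₁)).div (hasDerivAt_id t) h₀.ne').congr_deriv ?_
    have : 1 - t ^ 2 ≠ 0 := by nlinarith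
    simp only [id, Pi.mul_apply]
    field_simp
    ring
  refine antitoneOn_of_hasDerivWithinAt_nonpos (convex_Ioo 0 1)
    (fun t ht => (hd t ht).continuousAt.continuousWithinAt)
    (fun t ht => (hd t (interior_subset ht)).hasDerivWithinAt) ?_
  rw [interior_Ioo]
  rintro t ⟨h₀, h₁⟩
  have hL := two_mul_le_logRatio h₀.le h₁
  exact div_nonpos_of_nonpos_of_nonneg (by nlinarith [sq_nonneg t]) (sq_nonneg t)

lemma phi_eq_mul_log (t : ℝ) :
    phi t = 1 - ((1 + t) * log (1 + t) + (1 - t) * log (1 - t)) / (2 * log 2) := by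
  simp only [phi, logb]
  ring

lemma continuous_phi : Continuous phi := by
  rw [show phi = _ from funext phi_eq_mul_log]
  fun_prop

lemma hasDerivAt_phi {t : ℝ} (h₁ : -1 < t) (h₂ : t < 1) :
    HasDerivAt phi (-logRatio t / (2 * log 2)) t := by
  have d₁ := (hasDerivAt_mul_log (by linarith : 1 + t ≠ 0)).comp t ((hasDerivAt_id t).const_add 1)
  have d₂ := (hasDerivAt_mul_log (by linarith : 1 - t ≠ 0)).comp t ((hasDerivAt_id t).const_sub 1)
  rw [show phi = _ from funext phi_eq_mul_log]
  refine (((d₁.add d₂).div_const (2 * log 2)).const_sub 1).congr_deriv ?_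
  simp only [logRatio]
  ring

lemma hasDerivAt_phi_sqrt {x : ℝ} (hx : x ∈ Ioo 0 1) :
    HasDerivAt (fun x => phi √x) (-(logRatio √x / √x) / (4 * log 2)) x := by
  have h₀ : 0 < √x := sqrt_pos.2 hx.1
  have h₁ : √x < 1 := (sqrt_lt' one_pos).2 (by simpa using hx.2)
  refine ((hasDerivAt_phi (by linarith) h₁).comp x (hasDerivAt_sqrt hx.1.ne')).congr_deriv ?_
  field_simp
  ring

lemma antitoneOn_phi_sqrt : AntitoneOn (fun x => phi √x) (Icc 0 1) := by
  refine antitoneOn_of_hasDerivWithinAt_nonpos (convex_Icc 0 1)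
    (continuous_phi.comp continuous_sqrt).continuousOn
    (fun x hx => (hasDerivAt_phi_sqrt (by rwa [← interior_Icc])).hasDerivWithinAt) ?_
  rw [interior_Icc]
  intro x hx
  have h₀ : 0 < √x := sqrt_pos.2 hx.1
  have hL := two_mul_le_logRatio h₀.le ((sqrt_lt' one_pos).2 (by simpa using hx.2))
  have hlog := log_pos one_lt_two
  exact div_nonpos_of_nonpos_of_nonneg (neg_nonpos.2 (div_nonneg (by linarith) h₀.le))
    (by positivity)

lemma monotoneOn_one_sub_mul_deriv_phi_sqrt :
    MonotoneOn (fun x => (1 - x) * (-(logRatio √x / √x) / (4 * log 2))) (Ioo 0 1) := by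
  have hsqrt : MapsTo (fun x => √x) (Ioo 0 1) (Ioo 0 1) := fun x hx =>
    ⟨sqrt_pos.2 hx.1, (sqrt_lt' one_pos).2 (by simpa using hx.2)⟩
  have hanti := antitoneOn_one_sub_sq_mul_logRatio_div.comp_MonotoneOn
    (fun a _ b _ hab => sqrt_le_sqrt hab) hsqrt
  intro a ha b hb hab
  have hlog := log_pos one_lt_two
  have key := div_le_div_of_nonneg_right (neg_le_neg (hanti ha hb hab)) (by positivity : 0 ≤ 4 * log 2)
  simp only [Function.comp, sq_sqrt ha.1.le, sq_sqrt hb.1.le] at key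
  convert key using 1 <;> ring

theorem monotoneOn_comp_affine_sub {g g' : ℝ → ℝ} {Q : ℝ} (hQ₀ : 0 ≤ Q) (hQ₁ : Q < 1)
    (hg : ContinuousOn g (Icc 0 1)) (hg' : ∀ x ∈ Ioo 0 1, HasDerivAt g (g' x) x)
    (hmono : MonotoneOn (fun x => (1 - x) * g' x) (Ioo 0 1)) :
    MonotoneOn (fun x => g (Q + (1 - Q) * x) - g x) (Icc 0 1) := by
  have hmaps : MapsTo (fun x => Q + (1 - Q) * x) (Icc 0 1) (Icc 0 1) := fun x hx =>
    ⟨by nlinarith [hx.1], by nlinarith [hx.2]⟩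
  have hmaps' : MapsTo (fun x => Q + (1 - Q) * x) (Ioo 0 1) (Ioo 0 1) := fun x hx =>
    ⟨by nlinarith [hx.1], by nlinarith [hx.2]⟩
  have hd : ∀ x ∈ Ioo 0 1, HasDerivAt (fun x => g (Q + (1 - Q) * x) - g x)
      (g' (Q + (1 - Q) * x) * (1 - Q) - g' x) x := by
    intro x hx
    have haffine : HasDerivAt (fun x => Q + (1 - Q) * x) (1 - Q) x := by
      simpa using ((hasDerivAt_id x).const_mul (1 - Q)).const_add Q
    exact ((hg' _ (hmaps' hx)).comp x haffine).sub (hg' x hx)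
  refine monotoneOn_of_hasDerivWithinAt_nonneg (convex_Icc 0 1)
    ((hg.comp (by fun_prop) hmaps).sub hg)
    (fun x hx => (hd x (by rwa [← interior_Icc])).hasDerivWithinAt) ?_
  rw [interior_Icc]
  intro x hx
  have hxy : x ≤ Q + (1 - Q) * x := by nlinarith [hx.2]
  have h := hmono hx (hmaps' hx) hxy
  have h1x : 0 < 1 - x := by linarith [hx.2]
  rw [sub_nonneg]
  refine le_of_mul_le_mul_left ?_ h1x
  calc (1 - x) * g' x ≤ (1 - (Q + (1 - Q) * x)) * g' (Q + (1 - Q) * x) := h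
    _ = (1 - x) * (g' (Q + (1 - Q) * x) * (1 - Q)) := by ring

theorem stmt_1 (Q : ℝ) (hQ0 : 0 ≤ Q) (hQ1 : Q ≤ 1) :
    MonotoneOn (fun x : ℝ => 1 + phi (Real.sqrt (Q + (1 - Q) * x)) - phi (Real.sqrt x))
      (Set.Icc 0 1) := by
  rcases hQ1.eq_or_lt with rfl | hQ1
  · intro a ha b hb hab
    have := antitoneOn_phi_sqrt ha hb hab
    simp only [sub_self, zero_mul, add_zero]
    linarith
  · have h := monotoneOn_comp_affine_sub (g := fun x => phi √x) hQ0 hQ1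
      (continuous_phi.comp continuous_sqrt).continuousOn
      (fun x hx => hasDerivAt_phi_sqrt hx) monotoneOn_one_sub_mul_deriv_phi_sqrt
    intro a ha b hb hab
    have := h ha hb hab
    simp only at this ⊢
    linarith
end

section
/- Let ρ be a two-qubit density matrix and set E_zz = ⟨Z⊗Z⟩, E_zx = ⟨Z⊗X⟩, E_xz = ⟨X⊗Z⟩, E_xx = ⟨X⊗X⟩ (expectation values in ρ). Then E_zz² + E_zx² ≤ 1, E_xz² + E_xx² ≤ 1, and (1 - E_zz² - E_zx²)(1 - E_xz² - E_xx²) ≥ (E_zz E_xz + E_zx E_xx)². -/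
/-!
For a Hermitian observable `A`, the variance `⟨(A - ⟨A⟩)²⟩` is nonnegative, so `⟨A⟩² ≤ ⟨A²⟩`.
With `σ(u) = u₁ Z + u₂ X` we have `σ(u)² = |u|²`, hence `(σ(u) ⊗ σ(v))² = |u|²|v|²` and the
correlation matrix `T = (E_ij)` satisfies `(uᵀ T v)² ≤ |u|² |v|²`, i.e. `‖T‖ ≤ 1`. Then `1 - T Tᵀ`
is positive semidefinite, and the three claims are its two diagonal entries and its determinant.
-/

open Matrix Kronecker ComplexOrder

noncomputable def PauliZ : Matrix (Fin 2) (Fin 2) ℂ := !![1, 0; 0, -1]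
noncomputable def PauliX : Matrix (Fin 2) (Fin 2) ℂ := !![0, 1; 1, 0]

lemma contraction_of_bilinear_bound {a b c d : ℝ}
    (h : ∀ u₁ u₂ v₁ v₂ : ℝ,
      (u₁ * (a * v₁ + b * v₂) + u₂ * (c * v₁ + d * v₂)) ^ 2 ≤ (u₁ ^ 2 + u₂ ^ 2) * (v₁ ^ 2 + v₂ ^ 2))
    (t s : ℝ) : (a * t + c * s) ^ 2 + (b * t + d * s) ^ 2 ≤ t ^ 2 + s ^ 2 := by
  set w := (a * t + c * s) ^ 2 + (b * t + d * s) ^ 2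
  have hw : w ^ 2 ≤ (t ^ 2 + s ^ 2) * w := by
    convert h t s (a * t + c * s) (b * t + d * s) using 2; ring
  nlinarith [sq_nonneg (a * t + c * s), sq_nonneg (b * t + d * s)]

lemma gram_bounds_of_contraction {a b c d : ℝ}
    (h : ∀ t s : ℝ, (a * t + c * s) ^ 2 + (b * t + d * s) ^ 2 ≤ t ^ 2 + s ^ 2) :
    a ^ 2 + b ^ 2 ≤ 1 ∧ c ^ 2 + d ^ 2 ≤ 1 ∧
      (a * c + b * d) ^ 2 ≤ (1 - a ^ 2 - b ^ 2) * (1 - c ^ 2 - d ^ 2) := by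
  refine ⟨by simpa using h 1 0, by simpa using h 0 1, ?_⟩
  have hdisc := discrim_le_zero (a := 1 - a ^ 2 - b ^ 2) (b := -2 * (a * c + b * d))
    (c := 1 - c ^ 2 - d ^ 2) fun t ↦ by nlinarith [h t 1]
  rw [discrim] at hdisc
  nlinarith

lemma re_trace_mul_sq_le {𝕜 n : Type*} [RCLike 𝕜] [Fintype n] [DecidableEq n]
    {A ρ : Matrix n n 𝕜} (hA : A.IsHermitian) (hρ : ρ.PosSemidef) (htr : ρ.trace = 1) :
    RCLike.re (A * ρ).trace ^ 2 ≤ RCLike.re (A * A * ρ).trace := by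
  set t := RCLike.re (A * ρ).trace
  set B := A - (t : 𝕜) • 1
  have hB : Bᴴ = B := by simp [B, hA.eq]
  have hvar : 0 ≤ (B * ρ * Bᴴ).trace := (hρ.mul_mul_conjTranspose_same B).trace_nonneg
  rw [trace_mul_cycle, hB] at hvar
  have hexp : B * B * ρ = A * A * ρ - ((2 * t : ℝ) : 𝕜) • (A * ρ) + ((t ^ 2 : ℝ) : 𝕜) • ρ := by
    simp only [B, Matrix.sub_mul, Matrix.mul_sub, Matrix.smul_mul, Matrix.mul_smul,
      Matrix.one_mul, Matrix.mul_one]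
    push_cast
    module
  rw [hexp, trace_add, trace_sub, trace_smul, trace_smul, htr, smul_eq_mul, smul_eq_mul,
    mul_one] at hvar
  have := (RCLike.nonneg_iff.mp hvar).1
  rw [map_add, map_sub, RCLike.re_ofReal_mul, RCLike.ofReal_re] at this
  nlinarith

noncomputable def pauliZX (a b : ℝ) : Matrix (Fin 2) (Fin 2) ℂ :=
  (a : ℂ) • PauliZ + (b : ℂ) • PauliX

lemma isHermitian_pauliZX (a b : ℝ) : (pauliZX a b).IsHermitian := by
  ext i j
  fin_cases i <;> fin_cases j <;> simp [pauliZX, PauliZ, PauliX]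

lemma pauliZX_mul_self (a b : ℝ) : pauliZX a b * pauliZX a b = ((a ^ 2 + b ^ 2 : ℝ) : ℂ) • 1 := by
  ext i j
  fin_cases i <;> fin_cases j <;>
    simp [pauliZX, PauliZ, PauliX, Matrix.mul_apply, Fin.sum_univ_two] <;> ring

noncomputable def correlation (P Q : Matrix (Fin 2) (Fin 2) ℂ)
    (ρ : Matrix (Fin 2 × Fin 2) (Fin 2 × Fin 2) ℂ) : ℝ :=
  ((P ⊗ₖ Q) * ρ).trace.re

lemma correlation_pauliZX (ρ : Matrix (Fin 2 × Fin 2) (Fin 2 × Fin 2) ℂ) (u₁ u₂ v₁ v₂ : ℝ) :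
    correlation (pauliZX u₁ u₂) (pauliZX v₁ v₂) ρ =
      u₁ * (correlation PauliZ PauliZ ρ * v₁ + correlation PauliZ PauliX ρ * v₂) +
        u₂ * (correlation PauliX PauliZ ρ * v₁ + correlation PauliX PauliX ρ * v₂) := by
  simp only [correlation, pauliZX, add_kronecker, kronecker_add, smul_kronecker, kronecker_smul,
    Matrix.add_mul, Matrix.smul_mul, trace_add, trace_smul, smul_eq_mul, Complex.add_re,
    Complex.re_ofReal_mul]
  ring

lemma correlation_pauliZX_sq_le {ρ : Matrix (Fin 2 × Fin 2) (Fin 2 × Fin 2) ℂ}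
    (hρ : ρ.PosSemidef) (htr : ρ.trace = 1) (u₁ u₂ v₁ v₂ : ℝ) :
    correlation (pauliZX u₁ u₂) (pauliZX v₁ v₂) ρ ^ 2 ≤ (u₁ ^ 2 + u₂ ^ 2) * (v₁ ^ 2 + v₂ ^ 2) := by
  have hsq : (pauliZX u₁ u₂ ⊗ₖ pauliZX v₁ v₂) * (pauliZX u₁ u₂ ⊗ₖ pauliZX v₁ v₂) =
      (((u₁ ^ 2 + u₂ ^ 2) * (v₁ ^ 2 + v₂ ^ 2) : ℝ) : ℂ) • 1 := by
    rw [← mul_kronecker_mul, pauliZX_mul_self, pauliZX_mul_self, smul_kronecker, kronecker_smul,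
      one_kronecker_one, smul_smul, Complex.ofReal_mul]
  have hherm : (pauliZX u₁ u₂ ⊗ₖ pauliZX v₁ v₂).IsHermitian := by
    rw [IsHermitian, conjTranspose_kronecker, isHermitian_pauliZX, isHermitian_pauliZX]
  have := re_trace_mul_sq_le hherm hρ htr
  rwa [hsq, smul_mul, Matrix.one_mul, trace_smul, htr, smul_eq_mul, mul_one,
    RCLike.re_to_complex, RCLike.re_to_complex, Complex.ofReal_re] at this

theorem stmt_7 (ρ : Matrix (Fin 2 × Fin 2) (Fin 2 × Fin 2) ℂ)
    (hρ : ρ.PosSemidef) (htr : ρ.trace = 1)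
    (Ezz Ezx Exz Exx : ℝ)
    (hzz : Ezz = ((PauliZ ⊗ₖ PauliZ) * ρ).trace.re)
    (hzx : Ezx = ((PauliZ ⊗ₖ PauliX) * ρ).trace.re)
    (hxz : Exz = ((PauliX ⊗ₖ PauliZ) * ρ).trace.re)
    (hxx : Exx = ((PauliX ⊗ₖ PauliX) * ρ).trace.re) :
    Ezz^2 + Ezx^2 ≤ 1 ∧ Exz^2 + Exx^2 ≤ 1 ∧
      (Ezz * Exz + Ezx * Exx)^2 ≤ (1 - Ezz^2 - Ezx^2) * (1 - Exz^2 - Exx^2) := by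
  subst hzz hzx hxz hxx
  refine gram_bounds_of_contraction (contraction_of_bilinear_bound fun u₁ u₂ v₁ v₂ ↦ ?_)
  have := correlation_pauliZX_sq_le hρ htr u₁ u₂ v₁ v₂
  rwa [correlation_pauliZX] at this
end

section
/- For |α| < 1, the first derivatives of the two branches of E_α also agree at s* = 2√(1+α²-α⁴): both equal √(1+α²-α⁴)/(2√(1-α⁴)). -/
/-!
Both branches are square roots of a chain of polynomial and square-root maps, so the chain rule
applies as soon as every radicand is nonzero at `s*`. Writing `c = 1 + α² - α⁴`, we have
`s*²/4 = c`, the radicand of `g₁` is `c - α² = 1 - α⁴`, and inside `g₂` one finds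
`√((1 - α²)(c - 1)) = |α|(1 - α²)`, so `1 - (1/|α|)·√(…) = α²` and the radicand is again `1 - α⁴`.
-/

open Real

namespace EAlpha

noncomputable def g₁ (α s : ℝ) : ℝ := √(s ^ 2 / 4 - α ^ 2)

noncomputable def g₂ (α s : ℝ) : ℝ :=
  √(1 - (1 - (1 / |α|) * √((1 - α ^ 2) * (s ^ 2 / 4 - 1))) ^ 2)

noncomputable def sStar (α : ℝ) : ℝ := 2 * √(1 + α ^ 2 - α ^ 4)

lemma hasDerivAt_sq_div_four_sub (c x : ℝ) : HasDerivAt (fun s : ℝ => s ^ 2 / 4 - c) (x / 2) x := by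
  refine (((hasDerivAt_pow 2 x).div_const 4).sub_const c).congr_deriv ?_
  norm_num
  ring

variable {α : ℝ}

lemma one_sub_sq_pos_of_abs_lt_one (hα : |α| < 1) : 0 < 1 - α ^ 2 :=
  sub_pos.mpr ((sq_lt_one_iff_abs_lt_one α).mpr hα)

lemma sStar_div_two (α : ℝ) : sStar α / 2 = √(1 + α ^ 2 - α ^ 4) := by
  rw [sStar]; ring

lemma sStar_sq_div_four (hα : |α| < 1) : sStar α ^ 2 / 4 = 1 + α ^ 2 - α ^ 4 := by
  have hα2 := one_sub_sq_pos_of_abs_lt_one hα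
  rw [sStar, mul_pow, sq_sqrt (by nlinarith [sq_nonneg α])]
  ring

lemma one_sub_sq_sq_pos (hα : |α| < 1) : 0 < 1 - α ^ 4 := by
  have hα2 := one_sub_sq_pos_of_abs_lt_one hα
  nlinarith [sq_nonneg α]

lemma radicand_g₂_sStar (hα : |α| < 1) :
    (1 - α ^ 2) * (sStar α ^ 2 / 4 - 1) = (|α| * (1 - α ^ 2)) ^ 2 := by
  rw [sStar_sq_div_four hα, mul_pow, sq_abs]
  ring

lemma sqrt_radicand_g₂_sStar (hα : |α| < 1) :
    √((1 - α ^ 2) * (sStar α ^ 2 / 4 - 1)) = |α| * (1 - α ^ 2) := by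
  have hα2 := one_sub_sq_pos_of_abs_lt_one hα
  rw [radicand_g₂_sStar hα, sqrt_sq (mul_nonneg (abs_nonneg α) hα2.le)]

lemma one_sub_inner_g₂_sStar (hα0 : α ≠ 0) (hα : |α| < 1) :
    1 - (1 / |α|) * √((1 - α ^ 2) * (sStar α ^ 2 / 4 - 1)) = α ^ 2 := by
  rw [sqrt_radicand_g₂_sStar hα]
  field_simp
  ring

theorem hasDerivAt_g₁_sStar (hα : |α| < 1) :
    HasDerivAt (g₁ α) (√(1 + α ^ 2 - α ^ 4) / (2 * √(1 - α ^ 4))) (sStar α) := by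
  have hrad : sStar α ^ 2 / 4 - α ^ 2 = 1 - α ^ 4 := by rw [sStar_sq_div_four hα]; ring
  have h := (hasDerivAt_sq_div_four_sub (α ^ 2) (sStar α)).sqrt
    (by rw [hrad]; exact (one_sub_sq_sq_pos hα).ne')
  rwa [hrad, sStar_div_two] at h

theorem hasDerivAt_g₂_sStar (hα0 : α ≠ 0) (hα : |α| < 1) :
    HasDerivAt (g₂ α) (√(1 + α ^ 2 - α ^ 4) / (2 * √(1 - α ^ 4))) (sStar α) := by
  have hα2 := one_sub_sq_pos_of_abs_lt_one hα
  have hu := (hasDerivAt_sq_div_four_sub 1 (sStar α)).const_mul (1 - α ^ 2)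
  have hv := hu.sqrt (by rw [radicand_g₂_sStar hα]; positivity)
  have hw := (hv.const_mul (1 / |α|)).const_sub 1
  have hg := (hw.fun_pow 2).const_sub 1 |>.sqrt (by
    rw [one_sub_inner_g₂_sStar hα0 hα, ← pow_mul]; exact (one_sub_sq_sq_pos hα).ne')
  refine hg.congr_deriv ?_
  rw [one_sub_inner_g₂_sStar hα0 hα, sqrt_radicand_g₂_sStar hα, ← sStar_div_two]
  field_simp
  rw [sq_abs]
  ring

end EAlpha

theorem stmt_11 (α : ℝ) (hα0 : 0 < |α|) (hα1 : |α| < 1) :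
    HasDerivAt (fun s : ℝ => Real.sqrt (s^2/4 - α^2))
      (Real.sqrt (1 + α^2 - α^4) / (2 * Real.sqrt (1 - α^4)))
      (2 * Real.sqrt (1 + α^2 - α^4)) ∧
    HasDerivAt
      (fun s : ℝ =>
        Real.sqrt (1 - (1 - (1/|α|) * Real.sqrt ((1 - α^2) * (s^2/4 - 1)))^2))
      (Real.sqrt (1 + α^2 - α^4) / (2 * Real.sqrt (1 - α^4)))
      (2 * Real.sqrt (1 + α^2 - α^4)) :=
  ⟨EAlpha.hasDerivAt_g₁_sStar hα1, EAlpha.hasDerivAt_g₂_sStar (abs_pos.mp hα0) hα1⟩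
end

section
/- Let τ_AE = [0]⊗(q̄ψ₀/2 + qψ₁/2) + [1]⊗(qψ₀/2 + q̄ψ₁/2) where ψ₀ = |ψ₀⟩⟨ψ₀|, ψ₁ = |ψ₁⟩⟨ψ₁| are pure states with real overlap ⟨ψ₀|ψ₁⟩ = F ∈ [0,1], q ∈ [0,1], q̄ = 1-q. Then the conditional entropy H(A|E)_τ = S(τ_AE) - S(τ_E) equals 1 + φ(√((q̄-q)² + 4qq̄F²)) - φ(F). -/
/-! Each diagonal block of `τ`, and `τ_E` itself, is `p |ψ₀⟩⟨ψ₀| + r |ψ₁⟩⟨ψ₁| = U V` with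
`U = [p ψ₀, r ψ₁]` and `V = [ψ₀, ψ₁]^*`. By Sylvester's identity its nonzero spectrum is that of
the `2 × 2` matrix `V U = [[p, r F], [p F, r]]`: the roots of `x² - (p + r) x + p r (1 - F²)`.
So `τ` has the eigenvalues `(1 ± D)/4`, each twice (`D` the square root in the statement), and
`τ_E` has `(1 ± F)/2`, besides zeros, which carry no entropy. Finally
`-(u/2) log₂ (u/2) = -(u log₂ u)/2 + u/2` turns the two entropies into `1 + φ(D)` and `φ(F)`. -/

open Matrix

/-- von Neumann entropy (in bits) of a Hermitian matrix, via its eigenvalues. -/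
noncomputable def vNEntropy {n : Type*} [Fintype n] [DecidableEq n]
    {M : Matrix n n ℂ} (hM : M.IsHermitian) : ℝ :=
  -∑ i, hM.eigenvalues i * Real.logb 2 (hM.eigenvalues i)

open Polynomial

noncomputable def negMulLogb (x : ℝ) : ℝ := -(x * Real.logb 2 x)

@[simp]
lemma negMulLogb_zero : negMulLogb 0 = 0 := by
  simp [negMulLogb]

lemma negMulLogb_half (u : ℝ) : negMulLogb (u / 2) = negMulLogb u / 2 + u / 2 := by
  rcases eq_or_ne u 0 with rfl | hu
  · simp
  · rw [negMulLogb, negMulLogb, Real.logb_div hu two_ne_zero, Real.logb_self_eq_one one_lt_two]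
    ring

lemma phi_eq_negMulLogb (x : ℝ) :
    phi x = negMulLogb ((1 + x) / 2) + negMulLogb ((1 - x) / 2) := by
  rw [negMulLogb_half, negMulLogb_half, phi, negMulLogb, negMulLogb]
  ring

lemma one_add_phi (x : ℝ) :
    1 + phi x = 2 * negMulLogb ((1 + x) / 4) + 2 * negMulLogb ((1 - x) / 4) := by
  rw [phi_eq_negMulLogb, show (1 + x) / 4 = (1 + x) / 2 / 2 by ring,
    show (1 - x) / 4 = (1 - x) / 2 / 2 by ring, negMulLogb_half ((1 + x) / 2),
    negMulLogb_half ((1 - x) / 2)]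
  ring

lemma vNEntropy_eq_of_charpoly {n : Type*} [Fintype n] [DecidableEq n] {A : Matrix n n ℂ}
    (hA : A.IsHermitian) {m k : ℕ} (s : Multiset ℝ)
    (h : X ^ m * A.charpoly = X ^ k * (s.map fun z : ℝ => X - C (z : ℂ)).prod) :
    vNEntropy hA = (s.map negMulLogb).sum := by
  have hne : X ^ m * A.charpoly ≠ 0 := ((monic_X_pow m).mul A.charpoly_monic).ne_zero
  have hs : s.map (fun z : ℝ => X - C (z : ℂ)) = (s.map (↑)).map fun z : ℂ => X - C z := by
    rw [Multiset.map_map]; rfl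
  have hroots := congrArg roots h
  rw [roots_mul hne, roots_mul (h ▸ hne), roots_X_pow, roots_X_pow,
    hA.roots_charpoly_eq_eigenvalues, hs, roots_multiset_prod_X_sub_C] at hroots
  have hsum := congrArg (fun t => (t.map (negMulLogb ∘ Complex.re)).sum) hroots
  simp only [Multiset.nsmul_singleton, Multiset.map_add, Multiset.map_replicate, Multiset.map_map,
    Function.comp_apply, Complex.zero_re, Complex.ofReal_re, negMulLogb_zero, Multiset.sum_add,
    Multiset.sum_replicate, nsmul_zero, Finset.sum_map_val, zero_add] at hsum
  rw [vNEntropy, ← Finset.sum_neg_distrib]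
  exact hsum

lemma vNEntropy_eq_of_charpoly_quadratic {n : Type*} [Fintype n] [DecidableEq n]
    {A : Matrix n n ℂ} (hA : A.IsHermitian) {m k j : ℕ} {a b : ℝ}
    (h : X ^ m * A.charpoly = X ^ k * ((X - C (a : ℂ)) * (X - C (b : ℂ))) ^ j) :
    vNEntropy hA = j * (negMulLogb a + negMulLogb b) := by
  rw [vNEntropy_eq_of_charpoly hA (j • {a, b})
    (by simpa [Multiset.map_nsmul, Multiset.prod_nsmul] using h)]
  simp [Multiset.map_nsmul, Multiset.sum_nsmul, mul_add]

lemma charpoly_blockDiagonal {ι n R : Type*} [Fintype ι] [DecidableEq ι] [Fintype n]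
    [DecidableEq n] [CommRing R] (M : ι → Matrix n n R) :
    (blockDiagonal M).charpoly = ∏ i, (M i).charpoly := by
  have : charmatrix (blockDiagonal M) = blockDiagonal fun i => charmatrix (M i) := by
    ext ⟨k, i⟩ ⟨k', i'⟩
    by_cases hi : i = i' <;> by_cases hk : k = k' <;> simp [blockDiagonal_apply, hi, hk]
  rw [charpoly, this, det_blockDiagonal]
  rfl

lemma charpoly_eq_prod_of_blocks_zero {ι n R : Type*} [Fintype ι] [DecidableEq ι] [Fintype n]
    [DecidableEq n] [CommRing R] (M : Matrix (ι × n) (ι × n) R)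
    (hM : ∀ a a' k k', a ≠ a' → M (a, k) (a', k') = 0) :
    M.charpoly = ∏ a, (of fun k k' => M (a, k) (a, k')).charpoly := by
  have hB : M = reindex (Equiv.prodComm n ι) (Equiv.prodComm n ι)
      (blockDiagonal fun a => of fun k k' => M (a, k) (a, k')) := by
    ext ⟨a, k⟩ ⟨a', k'⟩
    by_cases ha : a = a'
    · subst ha
      simp [blockDiagonal_apply]
    · simp [blockDiagonal_apply, ha, hM a a' k k' ha]
  conv_lhs => rw [hB]
  rw [charpoly_reindex, charpoly_blockDiagonal]

lemma X_pow_mul_charpoly_of_blocks_zero {ι n R : Type*} [Fintype ι] [DecidableEq ι] [Fintype n]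
    [DecidableEq n] [CommRing R] (M : Matrix (ι × n) (ι × n) R)
    (hM : ∀ a a' k k', a ≠ a' → M (a, k) (a', k') = 0) {m : ℕ} {P : R[X]}
    (hP : ∀ a, X ^ m * (of fun k k' => M (a, k) (a, k')).charpoly = P) :
    X ^ (m * Fintype.card ι) * M.charpoly = P ^ Fintype.card ι := by
  rw [charpoly_eq_prod_of_blocks_zero M hM, pow_mul, ← Finset.card_univ, ← Finset.prod_const,
    ← Finset.prod_const, ← Finset.prod_mul_distrib]
  exact Finset.prod_congr rfl fun a _ => hP a

lemma charpoly_rankTwo {n : Type*} [Fintype n] [DecidableEq n] (ψ φ : n → ℂ) (p r c : ℂ)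
    (hψ : star ψ ⬝ᵥ ψ = 1) (hφ : star φ ⬝ᵥ φ = 1) (hψφ : star ψ ⬝ᵥ φ = c) :
    X ^ 2 * (p • vecMulVec ψ (star ψ) + r • vecMulVec φ (star φ)).charpoly
      = X ^ Fintype.card n * (X ^ 2 - C (p + r) * X + C (p * r * (1 - c * star c))) := by
  have hφψ : star φ ⬝ᵥ ψ = star c := by
    rw [← hψφ, star_dotProduct]
  let U : Matrix n (Fin 2) ℂ := of fun k j => ![p • ψ, r • φ] j k
  let V : Matrix (Fin 2) n ℂ := of ![star ψ, star φ]
  have hUV : U * V = p • vecMulVec ψ (star ψ) + r • vecMulVec φ (star φ) := by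
    ext k k'
    simp only [U, V, mul_apply, Fin.sum_univ_two, of_apply, cons_val_zero, cons_val_one,
      Pi.smul_apply, smul_eq_mul, Matrix.add_apply, Matrix.smul_apply, vecMulVec_apply]
    ring
  have hVU : V * U = !![p, r * c; p * star c, r] := by
    ext i j
    fin_cases i <;> fin_cases j
    · show star ψ ⬝ᵥ (p • ψ) = p
      simp [hψ]
    · show star ψ ⬝ᵥ (r • φ) = r * c
      simp [hψφ]
    · show star φ ⬝ᵥ (p • ψ) = p * star c
      simp [hφψ]
    · show star φ ⬝ᵥ (r • φ) = r
      simp [hφ]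
  have key := charpoly_mul_comm' U V
  rw [hUV, hVU, charpoly_fin_two, trace_fin_two, det_fin_two] at key
  simp only [Fintype.card_fin, of_apply, cons_val', cons_val_zero, cons_val_one,
    cons_val_fin_one] at key
  rw [key]
  simp only [map_add, map_sub, map_mul, map_one]
  ring

lemma X_sq_sub_C_mul_X_add_C {R : Type*} [CommRing R] {s t a b : R} (hs : s = a + b)
    (ht : t = a * b) : X ^ 2 - C s * X + C t = (X - C a) * (X - C b) := by
  subst hs ht
  simp only [map_add, map_mul]
  ring

lemma charpoly_rankTwo_of_vieta {n : Type*} [Fintype n] [DecidableEq n] (ψ φ : n → ℂ)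
    (p r a b : ℝ) {F : ℝ} (hψ : star ψ ⬝ᵥ ψ = 1) (hφ : star φ ⬝ᵥ φ = 1)
    (hψφ : star ψ ⬝ᵥ φ = F) (hsum : p + r = a + b) (hprod : p * r * (1 - F ^ 2) = a * b) :
    X ^ 2 * ((p : ℂ) • vecMulVec ψ (star ψ) + (r : ℂ) • vecMulVec φ (star φ)).charpoly
      = X ^ Fintype.card n * ((X - C (a : ℂ)) * (X - C (b : ℂ))) := by
  rw [charpoly_rankTwo ψ φ _ _ _ hψ hφ hψφ, X_sq_sub_C_mul_X_add_C]
  · exact_mod_cast hsum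
  · rw [Complex.star_def, Complex.conj_ofReal]
    exact_mod_cast (sq F ▸ hprod)

lemma star_dotProduct_self_eq_one {n : Type*} [Fintype n] {ψ : n → ℂ}
    (h : ∑ k, Complex.normSq (ψ k) = 1) : star ψ ⬝ᵥ ψ = 1 := by
  simp only [dotProduct, Pi.star_apply, RCLike.star_def, ← Complex.normSq_eq_conj_mul_self]
  exact_mod_cast h

theorem stmt_16_general {d : ℕ} (ψ0 ψ1 : Fin d → ℂ) (q F : ℝ)
    (hq : q ∈ Set.Icc (0:ℝ) 1)
    (hn0 : ∑ k : Fin d, Complex.normSq (ψ0 k) = 1)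
    (hn1 : ∑ k : Fin d, Complex.normSq (ψ1 k) = 1)
    (hov : ∑ k : Fin d, (starRingEnd ℂ) (ψ0 k) * ψ1 k = (F : ℂ))
    (τ : Matrix (Fin 2 × Fin d) (Fin 2 × Fin d) ℂ)
    (hτdef : ∀ (a a' : Fin 2) (k k' : Fin d),
      τ (a, k) (a', k') =
        if a = a' then
          (if a = 0 then
            (((1 - q)/2 : ℝ) : ℂ) * (ψ0 k * (starRingEnd ℂ) (ψ0 k'))
              + ((q/2 : ℝ) : ℂ) * (ψ1 k * (starRingEnd ℂ) (ψ1 k'))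
          else
            ((q/2 : ℝ) : ℂ) * (ψ0 k * (starRingEnd ℂ) (ψ0 k'))
              + (((1 - q)/2 : ℝ) : ℂ) * (ψ1 k * (starRingEnd ℂ) (ψ1 k')))
        else 0)
    (τE : Matrix (Fin d) (Fin d) ℂ)
    (hτEdef : ∀ k k', τE k k' = τ (0, k) (0, k') + τ (1, k) (1, k'))
    (hτ : τ.IsHermitian) (hτE : τE.IsHermitian) :
    vNEntropy hτ - vNEntropy hτE =
      1 + phi (Real.sqrt (((1 - q) - q)^2 + 4 * q * (1 - q) * F^2)) - phi F := by
  set D := Real.sqrt (((1 - q) - q)^2 + 4 * q * (1 - q) * F^2)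
  have hD : D ^ 2 = ((1 - q) - q)^2 + 4 * q * (1 - q) * F^2 :=
    Real.sq_sqrt (by nlinarith [mul_nonneg (mul_nonneg hq.1 (sub_nonneg.2 hq.2)) (sq_nonneg F)])
  have hprod : (1 - q) / 2 * (q / 2) * (1 - F ^ 2) = (1 + D) / 4 * ((1 - D) / 4) := by
    linear_combination (1 / 16 : ℝ) * hD
  have h0 := star_dotProduct_self_eq_one hn0
  have h1 := star_dotProduct_self_eq_one hn1
  have hblock : ∀ a : Fin 2, X ^ 2 * (of fun k k' => τ (a, k) (a, k')).charpoly
      = X ^ d * ((X - C (((1 + D) / 4 : ℝ) : ℂ)) * (X - C (((1 - D) / 4 : ℝ) : ℂ))) := by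
    rw [Fin.forall_fin_two]
    constructor
    · convert charpoly_rankTwo_of_vieta ψ0 ψ1 ((1 - q) / 2) (q / 2) ((1 + D) / 4) ((1 - D) / 4)
        h0 h1 hov (by ring) hprod using 3
      · ext k k'
        simp [hτdef, vecMulVec_apply]
      · simp
    · convert charpoly_rankTwo_of_vieta ψ0 ψ1 (q / 2) ((1 - q) / 2) ((1 + D) / 4) ((1 - D) / 4)
        h0 h1 hov (by ring) (by linear_combination hprod) using 3
      · ext k k'
        simp [hτdef, vecMulVec_apply]
      · simp
  have hτχ := X_pow_mul_charpoly_of_blocks_zero τ (fun a a' k k' h => by simp [hτdef, h]) hblock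
  rw [mul_pow, ← pow_mul] at hτχ
  have hτEχ : X ^ 2 * τE.charpoly
      = X ^ d * ((X - C (((1 + F) / 2 : ℝ) : ℂ)) * (X - C (((1 - F) / 2 : ℝ) : ℂ))) ^ 1 := by
    convert charpoly_rankTwo_of_vieta ψ0 ψ1 (1 / 2) (1 / 2) ((1 + F) / 2) ((1 - F) / 2) h0 h1 hov
      (by ring) (by ring) using 3
    · ext k k'
      simp only [hτEdef, hτdef, if_pos, one_ne_zero, if_false, Matrix.add_apply, Matrix.smul_apply,
        vecMulVec_apply, Pi.star_apply, RCLike.star_def, smul_eq_mul]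
      push_cast
      ring
    · simp
    · simp
  rw [vNEntropy_eq_of_charpoly_quadratic hτ hτχ, vNEntropy_eq_of_charpoly_quadratic hτE hτEχ,
    one_add_phi, phi_eq_negMulLogb, Fintype.card_fin]
  push_cast
  ring

theorem stmt_16 {d : ℕ} (ψ0 ψ1 : Fin d → ℂ) (q F : ℝ)
    (hq : q ∈ Set.Icc (0:ℝ) 1) (hF : F ∈ Set.Icc (0:ℝ) 1)
    (hn0 : ∑ k : Fin d, Complex.normSq (ψ0 k) = 1)
    (hn1 : ∑ k : Fin d, Complex.normSq (ψ1 k) = 1)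
    (hov : ∑ k : Fin d, (starRingEnd ℂ) (ψ0 k) * ψ1 k = (F : ℂ))
    (τ : Matrix (Fin 2 × Fin d) (Fin 2 × Fin d) ℂ)
    (hτdef : ∀ (a a' : Fin 2) (k k' : Fin d),
      τ (a, k) (a', k') =
        if a = a' then
          (if a = 0 then
            (((1 - q)/2 : ℝ) : ℂ) * (ψ0 k * (starRingEnd ℂ) (ψ0 k'))
              + ((q/2 : ℝ) : ℂ) * (ψ1 k * (starRingEnd ℂ) (ψ1 k'))
          else
            ((q/2 : ℝ) : ℂ) * (ψ0 k * (starRingEnd ℂ) (ψ0 k'))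
              + (((1 - q)/2 : ℝ) : ℂ) * (ψ1 k * (starRingEnd ℂ) (ψ1 k')))
        else 0)
    (τE : Matrix (Fin d) (Fin d) ℂ)
    (hτEdef : ∀ k k', τE k k' = τ (0, k) (0, k') + τ (1, k) (1, k'))
    (hτ : τ.IsHermitian) (hτE : τE.IsHermitian) :
    vNEntropy hτ - vNEntropy hτE =
      1 + phi (Real.sqrt (((1 - q) - q)^2 + 4 * q * (1 - q) * F^2)) - phi F :=
  stmt_16_general ψ0 ψ1 q F hq hn0 hn1 hov τ hτdef τE hτEdef hτ hτE
end

section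
/- Let α, β ∈ ℝ with |α| ≥ 1 and |β| ≤ 2/|α|. For any quantum state and ±1-valued observables A₁, A₂ on Alice's side and B₁, B₂ on Bob's side, the expectation value of I_α^β = β⟨A₁⟩ + α⟨A₁B₁⟩ + α⟨A₁B₂⟩ + ⟨A₂B₁⟩ - ⟨A₂B₂⟩ is at most 2√((1+α²)(1+β²/4)). If instead |β| ≥ 2/|α|, the bound is |β| + 2|α|. -/
open Matrix Kronecker ComplexOrder

/-!
Write `M` for the Bell operator and `c` for the claimed bound. Since `⟨M⟩² ≤ ⟨M²⟩` in every
state, it suffices to write `c² - M²` as a nonnegative combination of squares of self-adjoint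
elements of the algebra generated by the observables, using only `aᵢ² = bⱼ² = 1` and
`[aᵢ, bⱼ] = 0`; no reduction to qubits is needed. For the quantum bound the certificate is
`2α² (c² - M²) = (α² - 1) Q₂² + (α² + 1) Q₃²`, which needs `|α| ≥ 1`. For the classical bound
(`α, β > 0` after flipping signs of observables) it consists of two positive semidefinite
quadratic forms in `aᵢ (2 - b₁ - b₂)` and `aᵢ (b₁ - b₂)` plus a multiple of `(b₁ - b₂)²`;
optimising the forms leaves that multiple nonnegative as soon as `αβ ≥ 2`.
-/

section Algebra

variable {R : Type*} [Ring R]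

structure IsBipartiteObservables [StarRing R] (a₁ a₂ b₁ b₂ : R) : Prop where
  isSelfAdjoint_a₁ : IsSelfAdjoint a₁
  isSelfAdjoint_a₂ : IsSelfAdjoint a₂
  isSelfAdjoint_b₁ : IsSelfAdjoint b₁
  isSelfAdjoint_b₂ : IsSelfAdjoint b₂
  a₁_mul_self : a₁ * a₁ = 1
  a₂_mul_self : a₂ * a₂ = 1
  b₁_mul_self : b₁ * b₁ = 1
  b₂_mul_self : b₂ * b₂ = 1
  commute₁₁ : Commute a₁ b₁
  commute₁₂ : Commute a₁ b₂
  commute₂₁ : Commute a₂ b₁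
  commute₂₂ : Commute a₂ b₂

def tiltedCHSH [Module ℝ R] (α β : ℝ) (a₁ a₂ b₁ b₂ : R) : R :=
  β • a₁ + α • (a₁ * b₁) + α • (a₁ * b₂) + a₂ * b₁ - a₂ * b₂

def quadForm {M : Type*} [Semiring M] [Module ℝ M] (x y z : ℝ) (u v : M) : M :=
  x • u ^ 2 + y • (u * v + v * u) + z • v ^ 2

lemma mul_mul_cancel_left_of_mul_self_eq_one {M : Type*} [Monoid M] {a : M} (ha : a * a = 1)
    (x : M) : a * (a * x) = x := by
  rw [← mul_assoc, ha, one_mul]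

section Symmetry

variable [Module ℝ R] (α β : ℝ) (a₁ a₂ b₁ b₂ : R)

lemma tiltedCHSH_neg_a₁ : tiltedCHSH (-α) (-β) (-a₁) a₂ b₁ b₂ = tiltedCHSH α β a₁ a₂ b₁ b₂ := by
  simp only [tiltedCHSH, neg_smul, smul_neg, neg_neg, neg_mul]

lemma tiltedCHSH_neg_a₂_b :
    tiltedCHSH (-α) β a₁ (-a₂) (-b₁) (-b₂) = tiltedCHSH α β a₁ a₂ b₁ b₂ := by
  simp only [tiltedCHSH, neg_smul, smul_neg, neg_neg, mul_neg, neg_mul]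

end Symmetry

namespace IsBipartiteObservables

variable [StarRing R] {a₁ a₂ b₁ b₂ : R}

lemma neg_a₁ (h : IsBipartiteObservables a₁ a₂ b₁ b₂) :
    IsBipartiteObservables (-a₁) a₂ b₁ b₂ :=
  { h with
    isSelfAdjoint_a₁ := h.isSelfAdjoint_a₁.neg
    a₁_mul_self := by rw [neg_mul_neg, h.a₁_mul_self]
    commute₁₁ := h.commute₁₁.neg_left
    commute₁₂ := h.commute₁₂.neg_left }

lemma neg_a₂_b (h : IsBipartiteObservables a₁ a₂ b₁ b₂) :
    IsBipartiteObservables a₁ (-a₂) (-b₁) (-b₂) where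
  isSelfAdjoint_a₁ := h.isSelfAdjoint_a₁
  isSelfAdjoint_a₂ := h.isSelfAdjoint_a₂.neg
  isSelfAdjoint_b₁ := h.isSelfAdjoint_b₁.neg
  isSelfAdjoint_b₂ := h.isSelfAdjoint_b₂.neg
  a₁_mul_self := h.a₁_mul_self
  a₂_mul_self := by rw [neg_mul_neg, h.a₂_mul_self]
  b₁_mul_self := by rw [neg_mul_neg, h.b₁_mul_self]
  b₂_mul_self := by rw [neg_mul_neg, h.b₂_mul_self]
  commute₁₁ := h.commute₁₁.neg_right
  commute₁₂ := h.commute₁₂.neg_right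
  commute₂₁ := h.commute₂₁.neg_left.neg_right
  commute₂₂ := h.commute₂₂.neg_left.neg_right

lemma isSelfAdjoint_mul (h : IsBipartiteObservables a₁ a₂ b₁ b₂) :
    IsSelfAdjoint (a₁ * b₁) ∧ IsSelfAdjoint (a₁ * b₂) ∧ IsSelfAdjoint (a₂ * b₁) ∧
      IsSelfAdjoint (a₂ * b₂) :=
  ⟨(h.isSelfAdjoint_a₁.commute_iff h.isSelfAdjoint_b₁).mp h.commute₁₁,
    (h.isSelfAdjoint_a₁.commute_iff h.isSelfAdjoint_b₂).mp h.commute₁₂,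
    (h.isSelfAdjoint_a₂.commute_iff h.isSelfAdjoint_b₁).mp h.commute₂₁,
    (h.isSelfAdjoint_a₂.commute_iff h.isSelfAdjoint_b₂).mp h.commute₂₂⟩

variable [Algebra ℝ R]

lemma isSelfAdjoint_tiltedCHSH [StarModule ℝ R] (h : IsBipartiteObservables a₁ a₂ b₁ b₂)
    (α β : ℝ) : IsSelfAdjoint (tiltedCHSH α β a₁ a₂ b₁ b₂) := by
  obtain ⟨s₁₁, s₁₂, s₂₁, s₂₂⟩ := h.isSelfAdjoint_mul
  have sa₁ := h.isSelfAdjoint_a₁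
  unfold tiltedCHSH
  aesop

theorem sos_quantum_bound (h : IsBipartiteObservables a₁ a₂ b₁ b₂) (α β : ℝ) :
    (2 * α ^ 2) • tiltedCHSH α β a₁ a₂ b₁ b₂ ^ 2
      + (α ^ 2 - 1) • ((α * β) • a₁ - a₁ * b₁ - a₁ * b₂ + α • (a₂ * b₁) - α • (a₂ * b₂)) ^ 2
      + (α ^ 2 + 1) • ((α * β) • a₂ - α • (a₁ * b₁) + α • (a₁ * b₂) - a₂ * b₁ - a₂ * b₂) ^ 2
      = (2 * α ^ 2 * ((1 + α ^ 2) * (4 + β ^ 2))) • (1 : R) := by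
  obtain ⟨-, -, -, -, ha₁, ha₂, hb₁, hb₂, h₁₁, h₁₂, h₂₁, h₂₂⟩ := h
  simp only [tiltedCHSH, sq, mul_add, add_mul, mul_sub, sub_mul, smul_mul_assoc, mul_smul_comm,
    mul_assoc, ha₁, ha₂, hb₁, hb₂, mul_mul_cancel_left_of_mul_self_eq_one ha₁,
    mul_mul_cancel_left_of_mul_self_eq_one ha₂, h₁₁.eq.symm, h₁₂.eq.symm, h₂₁.eq.symm,
    h₂₂.eq.symm, h₁₁.symm.left_comm, h₁₂.symm.left_comm, h₂₁.symm.left_comm,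
    h₂₂.symm.left_comm, mul_one]
  match_scalars <;> ring

theorem sos_classical_bound (h : IsBipartiteObservables a₁ a₂ b₁ b₂) (α β x z t : ℝ) :
    tiltedCHSH α β a₁ a₂ b₁ b₂ ^ 2
      + quadForm x ((2 * α - β) / 4) z ((2 : ℝ) • a₁ - a₁ * b₁ - a₁ * b₂) (a₂ * b₁ - a₂ * b₂)
      + quadForm (α * β / 2 - x) (-(β + 2 * α) / 4) t ((2 : ℝ) • a₂ - a₂ * b₁ - a₂ * b₂)
          (a₁ * b₁ - a₁ * b₂)
      + (α * β / 2 + α ^ 2 - 1 - z - t) • (b₁ - b₂) ^ 2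
      = (β + 2 * α) ^ 2 • (1 : R) := by
  obtain ⟨-, -, -, -, ha₁, ha₂, hb₁, hb₂, h₁₁, h₁₂, h₂₁, h₂₂⟩ := h
  simp only [tiltedCHSH, quadForm, sq, mul_add, add_mul, mul_sub, sub_mul, smul_mul_assoc,
    mul_smul_comm, smul_add, smul_sub, mul_assoc, ha₁, ha₂, hb₁, hb₂,
    mul_mul_cancel_left_of_mul_self_eq_one ha₁, mul_mul_cancel_left_of_mul_self_eq_one ha₂,
    h₁₁.eq.symm, h₁₂.eq.symm, h₂₁.eq.symm, h₂₂.eq.symm, h₁₁.symm.left_comm,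
    h₁₂.symm.left_comm, h₂₁.symm.left_comm, h₂₂.symm.left_comm, mul_one]
  match_scalars <;> ring

end IsBipartiteObservables

end Algebra

section Expectation

variable {k : Type*} [Fintype k]

noncomputable def expectation (ρ : Matrix k k ℂ) : Matrix k k ℂ →ₗ[ℝ] ℝ :=
  Complex.reLm ∘ₗ (traceLinearMap k ℂ ℂ).restrictScalars ℝ ∘ₗ LinearMap.mulRight ℝ ρ

lemma expectation_apply (ρ X : Matrix k k ℂ) : expectation ρ X = (X * ρ).trace.re := rfl

variable [DecidableEq k] {ρ : Matrix k k ℂ}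

lemma expectation_one (htr : ρ.trace = 1) : expectation ρ 1 = 1 := by
  simp [expectation_apply, htr]

lemma expectation_sq_nonneg (hρ : ρ.PosSemidef) {Q : Matrix k k ℂ} (hQ : IsSelfAdjoint Q) :
    0 ≤ expectation ρ (Q ^ 2) := by
  have h := (hρ.mul_mul_conjTranspose_same Q).trace_nonneg
  rw [show Qᴴ = Q from hQ, trace_mul_comm, ← mul_assoc, ← sq] at h
  exact (RCLike.nonneg_iff.mp h).1

lemma expectation_quadForm_nonneg (hρ : ρ.PosSemidef) {U V : Matrix k k ℂ}
    (hU : IsSelfAdjoint U) (hV : IsSelfAdjoint V) {x y z : ℝ} (hx : 0 ≤ x) (hz : 0 ≤ z)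
    (hxz : y ^ 2 ≤ x * z) : 0 ≤ expectation ρ (quadForm x y z U V) := by
  rcases hx.eq_or_lt with rfl | hx
  · obtain rfl : y = 0 := by nlinarith
    simpa [quadForm] using mul_nonneg hz (expectation_sq_nonneg hρ hV)
  · have hsq : x • quadForm x y z U V = (x • U + y • V) ^ 2 + (x * z - y ^ 2) • V ^ 2 := by
      simp only [quadForm, sq, smul_add, mul_add, add_mul, smul_mul_assoc, mul_smul_comm]
      match_scalars <;> ring
    have hW : IsSelfAdjoint (x • U + y • V) := by aesop
    have := congrArg (expectation ρ) hsq
    simp only [map_add, map_smul, smul_eq_mul] at this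
    nlinarith [expectation_sq_nonneg hρ hW, expectation_sq_nonneg hρ hV]

lemma sq_expectation_le (hρ : ρ.PosSemidef) (htr : ρ.trace = 1) {M : Matrix k k ℂ}
    (hM : IsSelfAdjoint M) : expectation ρ M ^ 2 ≤ expectation ρ (M ^ 2) := by
  set t := expectation ρ M with ht
  have hvar : (M - t • 1) ^ 2 = M ^ 2 - (2 * t) • M + t ^ 2 • 1 := by
    simp only [sq, mul_sub, sub_mul, smul_mul_assoc, mul_smul_comm, one_mul, mul_one]
    match_scalars <;> ring
  have := expectation_sq_nonneg hρ (hM.sub ((IsSelfAdjoint.all t).smul (.one _)))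
  rw [hvar] at this
  simp only [map_add, map_sub, map_smul, smul_eq_mul, expectation_one htr, ← ht] at this
  linarith

lemma expectation_le_of_sq_le (hρ : ρ.PosSemidef) (htr : ρ.trace = 1) {M : Matrix k k ℂ}
    (hM : IsSelfAdjoint M) {c : ℝ} (hc : 0 ≤ c) (h : expectation ρ (M ^ 2) ≤ c ^ 2) :
    expectation ρ M ≤ c :=
  le_of_sq_le_sq ((sq_expectation_le hρ htr hM).trans h) hc

end Expectation

lemma sq_abs_sub_add_le_of_two_le_mul {α β : ℝ} (hα : 1 ≤ α) (hβ : 0 < β) (hαβ : 2 ≤ α * β) :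
    (|2 * α - β| + (β + 2 * α)) ^ 2 ≤ 4 * (α * β) * (α * β + 2 * α ^ 2 - 2) := by
  rcases abs_cases (2 * α - β) with ⟨h, -⟩ | ⟨h, -⟩ <;> rw [h]
  · nlinarith [mul_nonneg (mul_nonneg (by linarith : 0 ≤ α) (by linarith : 0 ≤ 2 * α + β))
      (by linarith : 0 ≤ α * β - 2)]
  · nlinarith [mul_nonneg (mul_nonneg hβ.le (by nlinarith : 0 ≤ α ^ 2 - 1))
      (by linarith : 0 ≤ 2 * α + β)]

namespace IsBipartiteObservables

variable {k : Type*} [Fintype k] [DecidableEq k] {a₁ a₂ b₁ b₂ ρ : Matrix k k ℂ}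

theorem expectation_tiltedCHSH_le_sqrt (h : IsBipartiteObservables a₁ a₂ b₁ b₂)
    (hρ : ρ.PosSemidef) (htr : ρ.trace = 1) {α : ℝ} (hα : 1 ≤ |α|) (β : ℝ) :
    expectation ρ (tiltedCHSH α β a₁ a₂ b₁ b₂) ≤ 2 * √((1 + α ^ 2) * (1 + β ^ 2 / 4)) := by
  obtain ⟨s₁₁, s₁₂, s₂₁, s₂₂⟩ := h.isSelfAdjoint_mul
  have sa₁ := h.isSelfAdjoint_a₁
  have sa₂ := h.isSelfAdjoint_a₂
  have hsos := congrArg (expectation ρ) (h.sos_quantum_bound α β)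
  simp only [map_add, map_smul, smul_eq_mul, expectation_one htr] at hsos
  have hQ₂ := expectation_sq_nonneg hρ
    (Q := (α * β) • a₁ - a₁ * b₁ - a₁ * b₂ + α • (a₂ * b₁) - α • (a₂ * b₂)) (by aesop)
  have hQ₃ := expectation_sq_nonneg hρ
    (Q := (α * β) • a₂ - α • (a₁ * b₁) + α • (a₁ * b₂) - a₂ * b₁ - a₂ * b₂) (by aesop)
  have hα2 : 1 ≤ α ^ 2 := by nlinarith [sq_abs α]
  refine expectation_le_of_sq_le hρ htr (h.isSelfAdjoint_tiltedCHSH α β) (by positivity) ?_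
  rw [mul_pow, Real.sq_sqrt (by positivity)]
  nlinarith [mul_nonneg (by linarith : 0 ≤ α ^ 2 - 1) hQ₂,
    mul_nonneg (by linarith : 0 ≤ α ^ 2 + 1) hQ₃]

theorem expectation_tiltedCHSH_le_of_pos (h : IsBipartiteObservables a₁ a₂ b₁ b₂)
    (hρ : ρ.PosSemidef) (htr : ρ.trace = 1) {α β : ℝ} (hα : 1 ≤ α) (hβ : 0 < β)
    (hαβ : 2 ≤ α * β) :
    expectation ρ (tiltedCHSH α β a₁ a₂ b₁ b₂) ≤ β + 2 * α := by
  obtain ⟨s₁₁, s₁₂, s₂₁, s₂₂⟩ := h.isSelfAdjoint_mul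
  have sa₁ := h.isSelfAdjoint_a₁
  have sa₂ := h.isSelfAdjoint_a₂
  have sb₁ := h.isSelfAdjoint_b₁
  have sb₂ := h.isSelfAdjoint_b₂
  set c := β + 2 * α
  set w := |2 * α - β|
  set u := w + c
  have hw : 0 ≤ w := abs_nonneg _
  have hw2 : w ^ 2 = (2 * α - β) ^ 2 := sq_abs _
  have hu : 0 < u := by positivity
  -- These weights minimise `z + t` subject to `x z = ((2α - β)/4)²` and
  -- `(αβ/2 - x) t = (c/4)²`; the minimum is `u² / (8αβ)`.
  have hsos := congrArg (expectation ρ)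
    (h.sos_classical_bound α β (α * β * w / (2 * u)) (w * u / (8 * (α * β)))
      (c * u / (8 * (α * β))))
  simp only [map_add, map_smul, smul_eq_mul, expectation_one htr] at hsos
  have hq₁ := expectation_quadForm_nonneg hρ (U := (2 : ℝ) • a₁ - a₁ * b₁ - a₁ * b₂)
    (V := a₂ * b₁ - a₂ * b₂) (by aesop) (by aesop) (x := α * β * w / (2 * u))
    (y := (2 * α - β) / 4) (z := w * u / (8 * (α * β))) (by positivity) (by positivity)
    (le_of_eq (by rw [div_pow, ← hw2]; field_simp; ring))
  have hx : α * β / 2 - α * β * w / (2 * u) = α * β * c / (2 * u) := by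
    field_simp; ring
  have hq₂ := expectation_quadForm_nonneg hρ (U := (2 : ℝ) • a₂ - a₂ * b₁ - a₂ * b₂)
    (V := a₁ * b₁ - a₁ * b₂) (by aesop) (by aesop) (x := α * β / 2 - α * β * w / (2 * u))
    (y := -(β + 2 * α) / 4) (z := c * u / (8 * (α * β))) (by rw [hx]; positivity)
    (by positivity) (le_of_eq (by rw [hx]; field_simp; ring))
  have hD := expectation_sq_nonneg hρ (Q := b₁ - b₂) (by aesop)
  have hslack : 0 ≤ α * β / 2 + α ^ 2 - 1 - w * u / (8 * (α * β)) - c * u / (8 * (α * β)) := by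
    have := sq_abs_sub_add_le_of_two_le_mul hα hβ hαβ
    field_simp
    nlinarith
  refine expectation_le_of_sq_le hρ htr (h.isSelfAdjoint_tiltedCHSH α β) (by positivity) ?_
  nlinarith [mul_nonneg hslack hD]

theorem expectation_tiltedCHSH_le_abs (h : IsBipartiteObservables a₁ a₂ b₁ b₂)
    (hρ : ρ.PosSemidef) (htr : ρ.trace = 1) {α β : ℝ} (hα : 1 ≤ |α|) (hαβ : 2 ≤ |α| * |β|) :
    expectation ρ (tiltedCHSH α β a₁ a₂ b₁ b₂) ≤ |β| + 2 * |α| := by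
  have hα0 : α ≠ 0 := abs_pos.mp (by linarith)
  have hβ0 : β ≠ 0 := by rintro rfl; simp at hαβ; linarith
  wlog hβ : 0 < β generalizing α β a₁
  · have := this h.neg_a₁ (α := -α) (β := -β) (by rwa [abs_neg]) (by rwa [abs_neg, abs_neg])
      (neg_ne_zero.mpr hα0) (neg_ne_zero.mpr hβ0) (neg_pos.mpr ((not_lt.mp hβ).lt_of_ne hβ0))
    rwa [tiltedCHSH_neg_a₁, abs_neg, abs_neg] at this
  wlog hα' : 0 < α generalizing α a₂ b₁ b₂
  · have := this h.neg_a₂_b (α := -α) (by rwa [abs_neg]) (by rwa [abs_neg])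
      (neg_ne_zero.mpr hα0) (neg_pos.mpr ((not_lt.mp hα').lt_of_ne hα0))
    rwa [tiltedCHSH_neg_a₂_b, abs_neg] at this
  rw [abs_of_pos hα'] at hα hαβ ⊢
  rw [abs_of_pos hβ] at hαβ ⊢
  exact h.expectation_tiltedCHSH_le_of_pos hρ htr hα hβ hαβ

end IsBipartiteObservables

section Kronecker

variable {l n : Type*} [Fintype l] [DecidableEq l] [Fintype n] [DecidableEq n]

lemma kronecker_one_mul_one_kronecker (A : Matrix l l ℂ) (B : Matrix n n ℂ) :
    (A ⊗ₖ (1 : Matrix n n ℂ)) * ((1 : Matrix l l ℂ) ⊗ₖ B) = A ⊗ₖ B := by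
  rw [← mul_kronecker_mul, mul_one, one_mul]

lemma isBipartiteObservables_kronecker {A₁ A₂ : Matrix l l ℂ} {B₁ B₂ : Matrix n n ℂ}
    (hA₁ : A₁.IsHermitian) (hA₂ : A₂.IsHermitian) (hB₁ : B₁.IsHermitian) (hB₂ : B₂.IsHermitian)
    (hA₁sq : A₁ * A₁ = 1) (hA₂sq : A₂ * A₂ = 1) (hB₁sq : B₁ * B₁ = 1) (hB₂sq : B₂ * B₂ = 1) :
    IsBipartiteObservables (A₁ ⊗ₖ (1 : Matrix n n ℂ)) (A₂ ⊗ₖ (1 : Matrix n n ℂ))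
      ((1 : Matrix l l ℂ) ⊗ₖ B₁) ((1 : Matrix l l ℂ) ⊗ₖ B₂) := by
  refine ⟨?_, ?_, ?_, ?_, ?_, ?_, ?_, ?_, ?_, ?_, ?_, ?_⟩ <;>
    simp only [IsSelfAdjoint, Commute, SemiconjBy, star_eq_conjTranspose, conjTranspose_kronecker,
      conjTranspose_one, hA₁.eq, hA₂.eq, hB₁.eq, hB₂.eq, ← mul_kronecker_mul, hA₁sq, hA₂sq, hB₁sq,
      hB₂sq, one_kronecker_one, mul_one, one_mul]

end Kronecker

theorem stmt_18 {m n : ℕ} (α β : ℝ) (hα : 1 ≤ |α|)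
    (ρ : Matrix (Fin m × Fin n) (Fin m × Fin n) ℂ)
    (hρ : ρ.PosSemidef) (htr : ρ.trace = 1)
    (A1 A2 : Matrix (Fin m) (Fin m) ℂ) (B1 B2 : Matrix (Fin n) (Fin n) ℂ)
    (hA1 : A1.IsHermitian) (hA2 : A2.IsHermitian)
    (hB1 : B1.IsHermitian) (hB2 : B2.IsHermitian)
    (hA1sq : A1 * A1 = 1) (hA2sq : A2 * A2 = 1)
    (hB1sq : B1 * B1 = 1) (hB2sq : B2 * B2 = 1)
    (I : ℝ)
    (hI : I = β * ((A1 ⊗ₖ (1 : Matrix (Fin n) (Fin n) ℂ)) * ρ).trace.re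
      + α * ((A1 ⊗ₖ B1) * ρ).trace.re + α * ((A1 ⊗ₖ B2) * ρ).trace.re
      + ((A2 ⊗ₖ B1) * ρ).trace.re - ((A2 ⊗ₖ B2) * ρ).trace.re) :
    (|β| ≤ 2 / |α| → I ≤ 2 * Real.sqrt ((1 + α^2) * (1 + β^2/4))) ∧
    (2 / |α| ≤ |β| → I ≤ |β| + 2 * |α|) := by
  have h := isBipartiteObservables_kronecker hA1 hA2 hB1 hB2 hA1sq hA2sq hB1sq hB2sq
  have hI' : I = expectation ρ (tiltedCHSH α β (A1 ⊗ₖ (1 : Matrix (Fin n) (Fin n) ℂ))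
      (A2 ⊗ₖ (1 : Matrix (Fin n) (Fin n) ℂ)) ((1 : Matrix (Fin m) (Fin m) ℂ) ⊗ₖ B1)
      ((1 : Matrix (Fin m) (Fin m) ℂ) ⊗ₖ B2)) := by
    simp only [hI, tiltedCHSH, kronecker_one_mul_one_kronecker, map_add, map_sub, map_smul,
      smul_eq_mul, expectation_apply]
  refine ⟨fun _ ↦ hI' ▸ h.expectation_tiltedCHSH_le_sqrt hρ htr hα β, fun hβ ↦ ?_⟩
  rw [div_le_iff₀ (by positivity)] at hβ
  exact hI' ▸ h.expectation_tiltedCHSH_le_abs hρ htr hα (by linarith)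
end
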